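/- arXiv:hep-th/9901120 — 3 statements merged into one kernel-verified Lean document; each statement's English description precedes it below -/
import Mathlib

section
/- With P(x) = x^{N+1} - \sum_{j=2}^{N+1} u_j x^{N+1-j} and R_n(x) = (P(x)^{n/(N+1)})_+ as above, the derivative of R_n with respect to x satisfies R_n'(x) = (n/(N+1)) P(x)^{(n-N-1)/(N+1)} P'(x) + O(x^{-2}) as a Laurent series at infinity. -/
/-- `x` viewed as a Laurent series at `x = ∞` (inverse of the local coordinate `t = x⁻¹`). -/
noncomputable def Xinf : LaurentSeries ℂ := HahnSeries.single (-1 : ℤ) 1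

/-! ### An Euler-type operator and the derivative in `x` on Laurent series at infinity -/

/-- Coefficientwise multiplication by `-k`. -/
noncomputable def Ederiv (A : LaurentSeries ℂ) : LaurentSeries ℂ where
  coeff k := (-(k : ℂ)) * A.coeff k
  isPWO_support' := A.isPWO_support.mono (by
    intro k hk
    simp only [Function.mem_support, ne_eq, mul_eq_zero, not_or] at hk
    exact hk.2)

@[simp] lemma Ederiv_coeff (A : LaurentSeries ℂ) (k : ℤ) :
    (Ederiv A).coeff k = (-(k : ℂ)) * A.coeff k := rfl

lemma Ederiv_support_subset (A : LaurentSeries ℂ) :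
    (Ederiv A).support ⊆ A.support := by
  intro k hk
  simp only [HahnSeries.mem_support, Ederiv_coeff, ne_eq, mul_eq_zero, not_or] at hk ⊢
  exact hk.2

lemma Ederiv_mul (A B : LaurentSeries ℂ) :
    Ederiv (A * B) = Ederiv A * B + A * Ederiv B := by
  ext m
  rw [HahnSeries.coeff_add,
    HahnSeries.coeff_mul_left' A.isPWO_support (Ederiv_support_subset A),
    HahnSeries.coeff_mul_right' B.isPWO_support (Ederiv_support_subset B),
    Ederiv_coeff, HahnSeries.coeff_mul, Finset.mul_sum, ← Finset.sum_add_distrib]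
  refine Finset.sum_congr rfl fun ij hij => ?_
  rw [Finset.mem_addAntidiagonal] at hij
  rw [Ederiv_coeff, Ederiv_coeff, ← hij.2.2]
  push_cast
  ring

/-- The derivative `d/dx` on Laurent series at infinity (`t = x⁻¹`). -/
noncomputable def Dx (A : LaurentSeries ℂ) : LaurentSeries ℂ :=
  HahnSeries.single (1 : ℤ) (1 : ℂ) * Ederiv A

lemma Dx_coeff (A : LaurentSeries ℂ) (k : ℤ) :
    (Dx A).coeff k = (1 - (k : ℂ)) * A.coeff (k - 1) := by
  have h : (Dx A).coeff ((k - 1) + 1) = (1 : ℂ) * (Ederiv A).coeff (k - 1) :=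
    HahnSeries.coeff_single_mul_add
  rw [sub_add_cancel] at h
  rw [h, one_mul, Ederiv_coeff]
  push_cast
  ring

lemma Dx_mul (A B : LaurentSeries ℂ) : Dx (A * B) = Dx A * B + A * Dx B := by
  unfold Dx
  rw [Ederiv_mul]
  ring

lemma Dx_add (A B : LaurentSeries ℂ) : Dx (A + B) = Dx A + Dx B := by
  have : Ederiv (A + B) = Ederiv A + Ederiv B := by
    ext k
    simp [HahnSeries.coeff_add, mul_add]
  unfold Dx
  rw [this, mul_add]

lemma Dx_one : Dx (1 : LaurentSeries ℂ) = 0 := by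
  have : Ederiv (1 : LaurentSeries ℂ) = 0 := by
    ext k
    rcases eq_or_ne k 0 with rfl | hk
    · simp
    · simp [HahnSeries.coeff_one, hk]
  unfold Dx
  rw [this, mul_zero]

lemma Dx_pow (A : LaurentSeries ℂ) :
    ∀ m : ℕ, Dx (A ^ m) * A = HahnSeries.C ((m : ℂ)) * (A ^ m * Dx A)
  | 0 => by simp [Dx_one]
  | (m + 1) => by
    calc Dx (A ^ (m + 1)) * A
        = (Dx (A ^ m) * A) * A + A ^ m * Dx A * A := by rw [pow_succ, Dx_mul]; ring
      _ = (HahnSeries.C ((m : ℂ)) * (A ^ m * Dx A)) * A + A ^ m * Dx A * A := by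
          rw [Dx_pow A m]
      _ = HahnSeries.C (((m + 1 : ℕ) : ℂ)) * (A ^ (m + 1) * Dx A) := by
          push_cast [map_add, map_one]
          ring

lemma Dx_single (a : ℤ) (c : ℂ) :
    Dx (HahnSeries.single a c) = HahnSeries.single (a + 1) ((-(a : ℂ)) * c) := by
  have h : Ederiv (HahnSeries.single a c) = HahnSeries.single a ((-(a : ℂ)) * c) := by
    ext k
    rcases eq_or_ne k a with rfl | hk
    · simp
    · simp [HahnSeries.coeff_single_of_ne hk]
  unfold Dx
  rw [h, HahnSeries.single_mul_single, one_mul, add_comm]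

/-! ### `aeval` at `Xinf` -/

lemma algebraMap_LS (c : ℂ) : (algebraMap ℂ (LaurentSeries ℂ)) c = HahnSeries.single 0 c := by
  rw [HahnSeries.algebraMap_apply',
    show (algebraMap ℂ (PowerSeries ℂ)) c = PowerSeries.C c from rfl,
    HahnSeries.ofPowerSeries_C, HahnSeries.C_apply]

lemma Xinf_pow (m : ℕ) : Xinf ^ m = HahnSeries.single (-(m : ℤ)) 1 := by
  rw [Xinf, HahnSeries.single_pow]
  congr 1
  · simp
  · simp

lemma aeval_Xinf_monomial (m : ℕ) (c : ℂ) :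
    (Polynomial.aeval Xinf (Polynomial.monomial m c) : LaurentSeries ℂ)
      = HahnSeries.single (-(m : ℤ)) c := by
  rw [Polynomial.aeval_monomial, Xinf_pow, algebraMap_LS,
    HahnSeries.single_mul_single, zero_add, mul_one]

lemma Dx_aeval (Q : Polynomial ℂ) :
    Dx (Polynomial.aeval Xinf Q) = Polynomial.aeval Xinf (Polynomial.derivative Q) := by
  induction Q using Polynomial.induction_on' with
  | add p q hp hq => rw [map_add, Dx_add, hp, hq, map_add, map_add]
  | monomial m c =>
    rw [aeval_Xinf_monomial, Dx_single, Polynomial.derivative_monomial]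
    rcases m with _ | m
    · simp
    · rw [aeval_Xinf_monomial]
      congr 1
      · push_cast; ring
      · push_cast; ring

/-! ### Normalized (monic) Laurent series of a given order -/

/-- `A` has lowest-order term `1 · t^d`. -/
def Mon (d : ℤ) (A : LaurentSeries ℂ) : Prop :=
  A.coeff d = 1 ∧ ∀ k < d, A.coeff k = 0

namespace Mon

lemma ne_zero {d : ℤ} {A : LaurentSeries ℂ} (h : Mon d A) : A ≠ 0 := by
  intro h0
  have := h.1
  rw [h0] at this
  simp at this

lemma order_eq {d : ℤ} {A : LaurentSeries ℂ} (h : Mon d A) : A.order = d := by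
  refine le_antisymm (HahnSeries.order_le_of_coeff_ne_zero (by rw [h.1]; exact one_ne_zero)) ?_
  by_contra hlt
  push_neg at hlt
  exact (mt HahnSeries.coeff_order_eq_zero.mp h.ne_zero) (h.2 _ hlt)

lemma leadingCoeff_eq {d : ℤ} {A : LaurentSeries ℂ} (h : Mon d A) : A.leadingCoeff = 1 := by
  have h1 : A.leadingCoeff = A.coeff A.order := by
    rw [HahnSeries.leadingCoeff_eq]
  rw [h1, h.order_eq, h.1]

lemma mul {d e : ℤ} {A B : LaurentSeries ℂ} (hA : Mon d A) (hB : Mon e B) :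
    Mon (d + e) (A * B) := by
  constructor
  · have := HahnSeries.coeff_mul_order_add_order A B
    rw [hA.order_eq, hB.order_eq, hA.leadingCoeff_eq, hB.leadingCoeff_eq, one_mul] at this
    exact this
  · intro k hk
    apply HahnSeries.coeff_eq_zero_of_lt_order
    rw [HahnSeries.order_mul hA.ne_zero hB.ne_zero, hA.order_eq, hB.order_eq]
    exact hk

lemma one : Mon 0 (1 : LaurentSeries ℂ) := by
  constructor
  · simp
  · intro k hk
    rw [HahnSeries.coeff_one, if_neg (by omega)]

lemma pow {d : ℤ} {A : LaurentSeries ℂ} (h : Mon d A) :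
    ∀ m : ℕ, Mon ((m : ℤ) * d) (A ^ m)
  | 0 => by simpa using one
  | (m + 1) => by
    have he : ((m + 1 : ℕ) : ℤ) * d = (m : ℤ) * d + d := by push_cast; ring
    rw [pow_succ, he]
    exact (h.pow m).mul h

end Mon

lemma coeff_sum {ι : Type*} (s : Finset ι) (f : ι → LaurentSeries ℂ) (k : ℤ) :
    (∑ i ∈ s, f i).coeff k = ∑ i ∈ s, (f i).coeff k := by
  classical
  induction s using Finset.induction_on with
  | empty => simp
  | insert _ _ h ih => rw [Finset.sum_insert h, Finset.sum_insert h, HahnSeries.coeff_add, ih]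

/-- Uniqueness of `Np`-th roots with normalized lowest-order term. -/
lemma root_unique {Np : ℕ} (hNp : 0 < Np) {A B : LaurentSeries ℂ} {d : ℤ}
    (hA : Mon d A) (hB : Mon d B) (h : A ^ Np = B ^ Np) : A = B := by
  have key : (∑ i ∈ Finset.range Np, A ^ i * B ^ (Np - 1 - i)) * (A - B) = 0 := by
    rw [geom_sum₂_mul, h, sub_self]
  have hS : (∑ i ∈ Finset.range Np, A ^ i * B ^ (Np - 1 - i)) ≠ 0 := by
    intro h0
    have hc : (∑ i ∈ Finset.range Np, A ^ i * B ^ (Np - 1 - i)).coeff (((Np : ℤ) - 1) * d)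
        = (Np : ℂ) := by
      rw [coeff_sum]
      have : ∀ i ∈ Finset.range Np,
          (A ^ i * B ^ (Np - 1 - i)).coeff (((Np : ℤ) - 1) * d) = 1 := by
        intro i hi
        rw [Finset.mem_range] at hi
        have hm : Mon (((i : ℤ)) * d + ((Np - 1 - i : ℕ) : ℤ) * d) (A ^ i * B ^ (Np - 1 - i)) :=
          (hA.pow i).mul (hB.pow (Np - 1 - i))
        have he : ((i : ℤ)) * d + ((Np - 1 - i : ℕ) : ℤ) * d = ((Np : ℤ) - 1) * d := by
          have : ((Np - 1 - i : ℕ) : ℤ) = (Np : ℤ) - 1 - i := by omega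
          rw [this]; ring
        rw [he] at hm
        exact hm.1
      rw [Finset.sum_congr rfl this, Finset.sum_const, Finset.card_range, nsmul_eq_mul, mul_one]
    rw [h0] at hc
    simp only [HahnSeries.coeff_zero] at hc
    exact (Nat.cast_ne_zero.mpr hNp.ne' : (Np : ℂ) ≠ 0) hc.symm
  rcases mul_eq_zero.mp key with h1 | h2
  · exact absurd h1 hS
  · exact sub_eq_zero.mp h2

/-- With `R_n = (P^{n/(N+1)})₊`, one has
`R_n'(x) = (n/(N+1)) P(x)^{(n-N-1)/(N+1)} P'(x) + O(x^{-2})` as Laurent series at infinity.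
Here `G = P^{(n-N-1)/(N+1)}` is the Laurent series with leading term `x^{n-N-1}` whose
`(N+1)`-th power is `P^{n-N-1}` (an integer `zpow` in the Laurent series field), and
`O(x^{-2})` means the coefficients of `x^{-1}, x^0, x, …` (i.e. `t`-exponents `≤ 1`) agree. -/
theorem stmt1 (N n : ℕ) (hN : 1 ≤ N) (hn : 1 ≤ n) (u : ℕ → ℂ)
    (P : Polynomial ℂ)
    (hP : P = Polynomial.X ^ (N + 1)
        - ∑ j ∈ Finset.Icc 2 (N + 1), Polynomial.C (u j) * Polynomial.X ^ (N + 1 - j))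
    (F : LaurentSeries ℂ)
    (hFpow : F ^ (N + 1) = (Polynomial.aeval Xinf P) ^ n)
    (hFlead : F.coeff (-(n : ℤ)) = 1)
    (hFlow : ∀ k : ℤ, k < -(n : ℤ) → F.coeff k = 0)
    (R : Polynomial ℂ)
    (hR : ∀ k : ℤ, k ≤ 0 → (Polynomial.aeval Xinf R : LaurentSeries ℂ).coeff k = F.coeff k)
    (G : LaurentSeries ℂ)
    (hGpow : G ^ (N + 1) = (Polynomial.aeval Xinf P : LaurentSeries ℂ) ^ ((n : ℤ) - N - 1))
    (hGlead : G.coeff (-((n : ℤ) - N - 1)) = 1)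
    (hGlow : ∀ k : ℤ, k < -((n : ℤ) - N - 1) → G.coeff k = 0) :
    ∀ k : ℤ, k ≤ 1 →
      (Polynomial.aeval Xinf (Polynomial.derivative R) : LaurentSeries ℂ).coeff k
        = (((n : ℂ) / ((N : ℂ) + 1)) •
            (G * Polynomial.aeval Xinf (Polynomial.derivative P))).coeff k := by
  classical
  set Pa : LaurentSeries ℂ := Polynomial.aeval Xinf P with hPa_def
  -- `Pa` written explicitly as a combination of `single`s
  have hPa_explicit : Pa = HahnSeries.single (-((N + 1 : ℕ) : ℤ)) 1
      - ∑ j ∈ Finset.Icc 2 (N + 1), HahnSeries.single (-((N + 1 - j : ℕ) : ℤ)) (u j) := by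
    rw [hPa_def, hP, map_sub, map_sum, map_pow, Polynomial.aeval_X, Xinf_pow]
    congr 1
    refine Finset.sum_congr rfl fun j hj => ?_
    rw [map_mul, Polynomial.aeval_C, map_pow, Polynomial.aeval_X, Xinf_pow, algebraMap_LS,
      HahnSeries.single_mul_single, zero_add, mul_one]
  -- `Pa` is monic of order `-(N+1)`
  have hMonPa : Mon (-((N + 1 : ℕ) : ℤ)) Pa := by
    constructor
    · rw [hPa_explicit, HahnSeries.coeff_sub, HahnSeries.coeff_single_same, coeff_sum]
      have : ∀ j ∈ Finset.Icc 2 (N + 1),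
          (HahnSeries.single (-((N + 1 - j : ℕ) : ℤ)) (u j)).coeff (-((N + 1 : ℕ) : ℤ)) = 0 := by
        intro j hj
        rw [Finset.mem_Icc] at hj
        exact HahnSeries.coeff_single_of_ne (by omega)
      rw [Finset.sum_congr rfl this, Finset.sum_const_zero, sub_zero]
    · intro k hk
      rw [hPa_explicit, HahnSeries.coeff_sub, HahnSeries.coeff_single_of_ne (by omega), coeff_sum]
      have : ∀ j ∈ Finset.Icc 2 (N + 1),
          (HahnSeries.single (-((N + 1 - j : ℕ) : ℤ)) (u j)).coeff k = 0 := by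
        intro j hj
        rw [Finset.mem_Icc] at hj
        refine HahnSeries.coeff_single_of_ne ?_
        have : ((N + 1 - j : ℕ) : ℤ) ≤ ((N + 1 : ℕ) : ℤ) := by omega
        omega
      rw [Finset.sum_congr rfl this, Finset.sum_const_zero, sub_zero]
  have hPa_ne : Pa ≠ 0 := hMonPa.ne_zero
  have hMonF : Mon (-(n : ℤ)) F := ⟨hFlead, hFlow⟩
  have hMonG : Mon (-((n : ℤ) - N - 1)) G := ⟨hGlead, hGlow⟩
  -- `F = G * Pa`
  have hFGP : F = G * Pa := by
    have hMonGP : Mon (-(n : ℤ)) (G * Pa) := by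
      have := hMonG.mul hMonPa
      have he : -((n : ℤ) - N - 1) + -((N + 1 : ℕ) : ℤ) = -(n : ℤ) := by push_cast; ring
      rwa [he] at this
    refine root_unique (Np := N + 1) (Nat.succ_pos N) hMonF hMonGP ?_
    rw [hFpow, mul_pow, hGpow]
    have : Pa ^ (N + 1) = Pa ^ ((N + 1 : ℕ) : ℤ) := (zpow_natCast Pa (N + 1)).symm
    rw [this, ← zpow_add₀ hPa_ne]
    have he : (n : ℤ) - N - 1 + ((N + 1 : ℕ) : ℤ) = (n : ℤ) := by push_cast; ring
    rw [he, zpow_natCast]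
  have hF_ne : F ≠ 0 := hMonF.ne_zero
  have hG_ne : G ≠ 0 := hMonG.ne_zero
  -- differentiate `F ^ (N+1) = Pa ^ n`
  have hD : HahnSeries.C ((N + 1 : ℕ) : ℂ) * (F ^ (N + 1) * Dx F) * Pa
      = HahnSeries.C ((n : ℕ) : ℂ) * (Pa ^ n * Dx Pa) * F := by
    rw [← Dx_pow F (N + 1), ← Dx_pow Pa n, hFpow]
    ring
  have hPan_ne : Pa ^ n ≠ 0 := pow_ne_zero n hPa_ne
  have hcancel : HahnSeries.C ((N + 1 : ℕ) : ℂ) * (Dx F * Pa)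
      = HahnSeries.C ((n : ℕ) : ℂ) * (Dx Pa * F) := by
    apply mul_left_cancel₀ hPan_ne
    calc Pa ^ n * (HahnSeries.C ((N + 1 : ℕ) : ℂ) * (Dx F * Pa))
        = HahnSeries.C ((N + 1 : ℕ) : ℂ) * (F ^ (N + 1) * Dx F) * Pa := by rw [hFpow]; ring
      _ = HahnSeries.C ((n : ℕ) : ℂ) * (Pa ^ n * Dx Pa) * F := hD
      _ = Pa ^ n * (HahnSeries.C ((n : ℕ) : ℂ) * (Dx Pa * F)) := by ring
  -- substitute `F = G * Pa` and cancel `Pa`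
  have hcancel2 : HahnSeries.C ((N + 1 : ℕ) : ℂ) * Dx F
      = HahnSeries.C ((n : ℕ) : ℂ) * (G * Dx Pa) := by
    apply mul_left_cancel₀ hPa_ne
    calc Pa * (HahnSeries.C ((N + 1 : ℕ) : ℂ) * Dx F)
        = HahnSeries.C ((N + 1 : ℕ) : ℂ) * (Dx F * Pa) := by ring
      _ = HahnSeries.C ((n : ℕ) : ℂ) * (Dx Pa * F) := hcancel
      _ = HahnSeries.C ((n : ℕ) : ℂ) * (Dx Pa * (G * Pa)) := by rw [← hFGP]
      _ = Pa * (HahnSeries.C ((n : ℕ) : ℂ) * (G * Dx Pa)) := by ring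
  -- pass to coefficients
  intro k hk
  have hNc : ((N : ℂ) + 1) ≠ 0 := by
    have : ((N + 1 : ℕ) : ℂ) ≠ 0 := Nat.cast_ne_zero.mpr (Nat.succ_ne_zero N)
    push_cast at this
    exact this
  have hcoeff := congrArg (fun A : LaurentSeries ℂ => A.coeff k) hcancel2
  have hCmul : ∀ (c : ℂ) (A : LaurentSeries ℂ) (m : ℤ),
      (HahnSeries.C c * A).coeff m = c * A.coeff m := by
    intro c A m
    rw [HahnSeries.C_apply, HahnSeries.single_zero_mul_eq_smul, HahnSeries.coeff_smul,
      smul_eq_mul]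
  rw [hCmul, hCmul] at hcoeff
  -- left-hand side
  have hL : (Polynomial.aeval Xinf (Polynomial.derivative R) : LaurentSeries ℂ).coeff k
      = (Dx F).coeff k := by
    rw [← Dx_aeval, Dx_coeff, Dx_coeff, hR (k - 1) (by omega)]
  rw [hL]
  -- right-hand side
  rw [HahnSeries.coeff_smul, ← Dx_aeval, ← hPa_def, smul_eq_mul]
  have : (Dx F).coeff k = ((n : ℕ) : ℂ) / ((N : ℂ) + 1) * (G * Dx Pa).coeff k := by
    field_simp
    have h1 : ((N + 1 : ℕ) : ℂ) = (N : ℂ) + 1 := by push_cast; ring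
    rw [← h1, mul_comm ((Dx F).coeff k) _, ← hcoeff]
  rw [this]
end

section
/- For the SO(2N) Seiberg-Witten differential dS_{SW} = (2Q'(x^2)x^2 - 2Q(x^2)) dx/y on y^2 = Q(x^2)^2 - 4\mu^2 x^4, the u_j-derivative at constant z equals x^{2N-2j} dx / y for j = 1,...,N. -/
/-!
Along the deformation `s ↦ Q₀ - s ξ^{N-j}` the point `ξ = x²` stays on the line
`Q_s(ξ) = c ξ` with `c = z + μ²/z` fixed. Differentiating this identity in `s` gives
`(Q'(ξ) - c) ξ' = ξ^{N-j}`, and since `c = Q(ξ)/ξ` and `ξ' = 2 x x'`, this is exactly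
`x' (2Q'(x²)x² - 2Q(x²)) = x · x^{2N-2j}`; dividing by `x y` gives the claim.
-/

open Polynomial

variable {𝕜 : Type*} [NontriviallyNormedField 𝕜]

theorem hasDerivAt_eval_sub_C_mul (P₀ R : 𝕜[X]) {ξ : 𝕜 → 𝕜} {ξ' s₀ : 𝕜}
    (hξ : HasDerivAt ξ ξ' s₀) :
    HasDerivAt (fun s => (P₀ - C s * R).eval (ξ s))
      ((P₀ - C s₀ * R).derivative.eval (ξ s₀) * ξ' - R.eval (ξ s₀)) s₀ := by
  have hP₀ : HasDerivAt (fun s => P₀.eval (ξ s)) (P₀.derivative.eval (ξ s₀) * ξ') s₀ :=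
    (P₀.hasDerivAt (ξ s₀)).comp s₀ hξ
  have hR : HasDerivAt (fun s => R.eval (ξ s)) (R.derivative.eval (ξ s₀) * ξ') s₀ :=
    (R.hasDerivAt (ξ s₀)).comp s₀ hξ
  have hfun : (fun s => (P₀ - C s * R).eval (ξ s)) = fun s => P₀.eval (ξ s) - s * R.eval (ξ s) := by
    funext s
    simp
  rw [hfun]
  refine (hP₀.fun_sub ((hasDerivAt_id' s₀).fun_mul hR)).congr_deriv ?_
  simp only [derivative_sub, derivative_C_mul, eval_sub, eval_mul, eval_C]
  ring

theorem implicit_deriv_of_eval_sub_C_mul_eq_mul (P₀ R : 𝕜[X]) (c : 𝕜) {ξ : 𝕜 → 𝕜}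
    {ξ' s₀ : 𝕜} (hξ : HasDerivAt ξ ξ' s₀) (hline : ∀ s, (P₀ - C s * R).eval (ξ s) = c * ξ s) :
    ((P₀ - C s₀ * R).derivative.eval (ξ s₀) - c) * ξ' = R.eval (ξ s₀) := by
  have hconst : HasDerivAt (fun s => (P₀ - C s * R).eval (ξ s)) (c * ξ') s₀ := by
    simpa only [hline] using hξ.const_mul c
  linear_combination (hasDerivAt_eval_sub_C_mul P₀ R hξ).unique hconst

theorem stmt11_general (N j : ℕ)
    (Q₀ : Polynomial ℂ) (μ z : ℂ)
    (Q : ℂ → Polynomial ℂ)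
    (hQ : ∀ s, Q s = Q₀ - Polynomial.C s * Polynomial.X ^ (N - j))
    (x : ℂ → ℂ) (x' : ℂ) (s₀ : ℂ)
    (hx : HasDerivAt x x' s₀)
    (hx0 : ∀ s, x s ≠ 0)
    (hcurve : ∀ s, (Q s).eval ((x s) ^ 2) / (x s) ^ 2 = z + μ ^ 2 / z)
    (y : ℂ) :
    x' * (2 * (Polynomial.derivative (Q s₀)).eval ((x s₀) ^ 2) * (x s₀) ^ 2
          - 2 * (Q s₀).eval ((x s₀) ^ 2)) / (x s₀ * y)
      = (x s₀) ^ (2 * N - 2 * j) / y := by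
  set c := z + μ ^ 2 / z
  have hline : ∀ s, (Q s).eval (x s ^ 2) = c * x s ^ 2 := fun s =>
    (div_eq_iff (pow_ne_zero 2 (hx0 s))).mp (hcurve s)
  have himplicit := implicit_deriv_of_eval_sub_C_mul_eq_mul Q₀ (X ^ (N - j)) c
    (ξ := fun s => x s ^ 2) (hx.fun_pow 2) (fun s => hQ s ▸ hline s)
  rw [← hQ s₀] at himplicit
  have hpow : x s₀ ^ (2 * N - 2 * j) = (x s₀ ^ 2) ^ (N - j) := by
    rw [← pow_mul, Nat.mul_sub]
  have hnum : x' * (2 * (Q s₀).derivative.eval (x s₀ ^ 2) * x s₀ ^ 2 - 2 * (Q s₀).eval (x s₀ ^ 2))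
      = x s₀ * x s₀ ^ (2 * N - 2 * j) := by
    simp only [eval_pow, eval_X, Nat.cast_ofNat] at himplicit
    rw [hpow, hline s₀]
    linear_combination x s₀ * himplicit
  rw [hnum, mul_div_mul_left _ _ (hx0 s₀)]

/-- For the SO(2N) Seiberg–Witten differential
`dS = (2Q'(x²)x² - 2Q(x²)) dx/y` on `y² = Q(x²)² - 4μ²x⁴` (Toda form
`z + μ²/z = x⁻²Q(x²)`, branch `z - μ²/z = y/x²`), with the coefficient `u_j` of
`Q(ξ) = Q₀(ξ) - u_j ξ^{N-j}` varied along the parameter `s` at constant `z`, the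
`u_j`-derivative of `dS` equals `x^{2N-2j} dx/y`:
`x'·(2Q'(x²)x² - 2Q(x²))/(x·y) = x^{2N-2j}/y` for `j = 1, …, N`. -/
theorem stmt11 (N j : ℕ) (hj1 : 1 ≤ j) (hj2 : j ≤ N)
    (Q₀ : Polynomial ℂ) (μ z : ℂ) (hz : z ≠ 0)
    (Q : ℂ → Polynomial ℂ)
    (hQ : ∀ s, Q s = Q₀ - Polynomial.C s * Polynomial.X ^ (N - j))
    (x : ℂ → ℂ) (x' : ℂ) (s₀ : ℂ)
    (hx : HasDerivAt x x' s₀)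
    (hx0 : ∀ s, x s ≠ 0)
    (hcurve : ∀ s, (Q s).eval ((x s) ^ 2) / (x s) ^ 2 = z + μ ^ 2 / z)
    (y : ℂ) (hy : y ≠ 0)
    (hy2 : y ^ 2 = ((Q s₀).eval ((x s₀) ^ 2)) ^ 2 - 4 * μ ^ 2 * (x s₀) ^ 4)
    (hybr : y / (x s₀) ^ 2 = z - μ ^ 2 / z) :
    x' * (2 * (Polynomial.derivative (Q s₀)).eval ((x s₀) ^ 2) * (x s₀) ^ 2
          - 2 * (Q s₀).eval ((x s₀) ^ 2)) / (x s₀ * y)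
      = (x s₀) ^ (2 * N - 2 * j) / y :=
  stmt11_general N j Q₀ μ z Q hQ x x' s₀ hx hx0 hcurve y
end

section
/- In the same abstract setting, (\partial/\partial T_m) dS|_{z=const} = d\hat\Omega_m - \sum_{j=1}^N c^{(m)}_j d\omega_j = d\Omega_m, where d\Omega_m is the A-cycle-normalized differential. -/
/-!
Differentiating `∑ₙ Tₙ Ω̂ₙ(U T)` along `T_m` gives `Ω̂_m + ∑ₙ Tₙ DΩ̂ₙ(∂U/∂T_m)`. Since the
derivatives of the `Ω̂ₙ` and the `cⁿⱼ` share the coefficients `σ`, the second term equals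
`∑ⱼ (∑ₙ Tₙ Dcⁿⱼ(∂U/∂T_m)) ωⱼ`, and differentiating the constraint `∑ₙ Tₙ cⁿⱼ(U T) = aⱼ` along
`T_m` shows that the inner sum is `-cᵐⱼ`.
-/

open Finset

theorem ContinuousLinearMap.apply_eq_sum_smul_of_apply_single {𝕜 ι κ E : Type*}
    [NontriviallyNormedField 𝕜] [Fintype ι] [DecidableEq ι] [Fintype κ] [NormedAddCommGroup E] [NormedSpace 𝕜 E]
    (L : (ι → 𝕜) →L[𝕜] E) (D : κ → (ι → 𝕜) →L[𝕜] 𝕜) (ω : κ → E)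
    (h : ∀ i, L (Pi.single i 1) = ∑ j, D j (Pi.single i 1) • ω j) (v : ι → 𝕜) :
    L v = ∑ j, D j v • ω j := by
  have : (L : (ι → 𝕜) →ₗ[𝕜] E) = ∑ j, (D j : (ι → 𝕜) →ₗ[𝕜] 𝕜).smulRight (ω j) :=
    (Pi.basisFun 𝕜 ι).ext fun i => by simp [h]
  simpa using LinearMap.congr_fun this v

theorem fderiv_sum_smul_comp_apply_single {𝕜 ι E F : Type*} [NontriviallyNormedField 𝕜]
    [Fintype ι] [DecidableEq ι] [NormedAddCommGroup E] [NormedSpace 𝕜 E]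
    [NormedAddCommGroup F] [NormedSpace 𝕜 F]
    {f : ι → E → F} {f' : ι → E →L[𝕜] F} {U : (ι → 𝕜) → E} {U' : (ι → 𝕜) →L[𝕜] E}
    {T₀ : ι → 𝕜} (hf : ∀ n, HasFDerivAt (f n) (f' n) (U T₀)) (hU : HasFDerivAt U U' T₀) (m : ι) :
    fderiv 𝕜 (fun T => ∑ n, T n • f n (U T)) T₀ (Pi.single m 1)
      = ∑ n, T₀ n • f' n (U' (Pi.single m 1)) + f m (U T₀) := by
  have hterm : ∀ n, HasFDerivAt (fun T : ι → 𝕜 => T n • f n (U T))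
      (T₀ n • (f' n).comp U' + (ContinuousLinearMap.proj n).smulRight (f n (U T₀))) T₀ :=
    fun n => (hasFDerivAt_apply n T₀).smul ((hf n).comp T₀ hU)
  rw [(HasFDerivAt.fun_sum fun n _ => hterm n).fderiv]
  simp [sum_add_distrib, Pi.single_apply]

/-- In the same abstract Whitham setting as Statement 14, now with the
inverse moduli `u = U(T)` as a function of the slow times `T` at fixed `a = av₀`
(so `∑ₙ Tₙ cⁿⱼ(U(T)) = av₀ⱼ` identically), the `T_m`-derivative of
`dS = ∑ₙ Tₙ d\hatΩ_n` at constant `a` is the `A`-cycle-normalized differential: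
`(∂/∂T_m) dS |_{z = const} = d\hatΩ_m - ∑ⱼ cᵐⱼ dωⱼ = dΩ_m`. -/
theorem stmt15 {N M : ℕ} {V : Type*} [NormedAddCommGroup V] [NormedSpace ℂ V]
    (Ωh : Fin M → (Fin N → ℂ) → V)
    (ω : Fin N → V)
    (c : Fin M → Fin N → (Fin N → ℂ) → ℂ)
    (σ : Fin M → Fin N → Fin N → ℂ)
    (T₀ : Fin M → ℂ) (u₀ : Fin N → ℂ)
    (DΩ : Fin M → ((Fin N → ℂ) →L[ℂ] V))
    (hDΩ : ∀ n, HasFDerivAt (Ωh n) (DΩ n) u₀)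
    (hDΩval : ∀ n k, DΩ n (Pi.single k 1) = ∑ j, σ n k j • ω j)
    (Dc : Fin M → Fin N → ((Fin N → ℂ) →L[ℂ] ℂ))
    (hDc : ∀ n j, HasFDerivAt (c n j) (Dc n j) u₀)
    (hσ : ∀ n k j, Dc n j (Pi.single k 1) = σ n k j)
    (av₀ : Fin N → ℂ)
    (U : (Fin M → ℂ) → (Fin N → ℂ))
    (hU0 : U T₀ = u₀)
    (DU : (Fin M → ℂ) →L[ℂ] (Fin N → ℂ))
    (hDU : HasFDerivAt U DU T₀)
    (hinv : ∀ T : Fin M → ℂ, ∀ j, ∑ n, T n * c n j (U T) = av₀ j) :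
    ∀ m, fderiv ℂ (fun T : Fin M → ℂ => ∑ n, T n • Ωh n (U T)) T₀ (Pi.single m 1)
      = Ωh m u₀ - ∑ j, c m j u₀ • ω j := by
  subst hU0
  intro m
  rw [fderiv_sum_smul_comp_apply_single hDΩ hDU m]
  set v := DU (Pi.single m 1)
  have hconstraint : ∀ j, ∑ n, T₀ n * Dc n j v = -c m j (U T₀) := by
    intro j
    have h := fderiv_sum_smul_comp_apply_single (fun n => hDc n j) hDU m
    simp only [smul_eq_mul, hinv, fderiv_const_apply, zero_apply] at h
    exact eq_neg_of_add_eq_zero_left h.symm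
  have hexpand : ∀ n, DΩ n v = ∑ j, Dc n j v • ω j := fun n =>
    (DΩ n).apply_eq_sum_smul_of_apply_single (Dc n) ω (by simpa [hσ] using hDΩval n) v
  simp only [hexpand, smul_sum, smul_smul]
  rw [sum_comm]
  simp only [← sum_smul, hconstraint, neg_smul, sum_neg_distrib]
  abel
end
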